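/- arXiv:2204.01643 — 5 statements merged into one kernel-verified Lean document; each statement's English description precedes it below -/
import Mathlib

section
/- Define f : ℝ → ℝ by f(x) := min{0, h(x)} − g(x) + |x|, where g(x) := ∫₀ˣ 2u·sin(1/u) du (integrand understood as 0 at u = 0) and h(x) := x²·sin(1/x) for x ≠ 0, h(0) := 0. Then for every x ∈ (0, 1/π) the left derivative f′₋(x) exists and satisfies f′₋(x) > 0, and for every x ∈ (−1/π, 0) the right derivative f′₊(x) exists and satisfies f′₊(x) < 0. Consequently f has no stationary point in (−1/π, 1/π) \ {0}. -/
open Filter Metric Set Real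

noncomputable section

/-- Left derivative `f′₋(x) = d`: `(f y - f x)/(y - x) → d` as `y ↑ x`. -/
def HasLeftDeriv (f : ℝ → ℝ) (x d : ℝ) : Prop :=
  Filter.Tendsto (fun y : ℝ => (f y - f x) / (y - x)) (nhdsWithin x (Set.Iio x)) (nhds d)

/-- Right derivative `f′₊(x) = d`: `(f y - f x)/(y - x) → d` as `y ↓ x`. -/
def HasRightDeriv (f : ℝ → ℝ) (x d : ℝ) : Prop :=
  Filter.Tendsto (fun y : ℝ => (f y - f x) / (y - x)) (nhdsWithin x (Set.Ioi x)) (nhds d)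

/-- `x` is a `δ`-stationary point of `f : ℝ → ℝ`: `f′₋(x) ≤ δ` and `f′₊(x) ≥ -δ`. -/
def IsDeltaStationaryPt1 (f : ℝ → ℝ) (δ x : ℝ) : Prop :=
  ∃ dm dp : ℝ, HasLeftDeriv f x dm ∧ HasRightDeriv f x dp ∧ dm ≤ δ ∧ -δ ≤ dp

/-- `x` is a stationary point of `f : ℝ → ℝ`: `f′₋(x) ≤ 0` and `f′₊(x) ≥ 0`. -/
def IsStationaryPt1 (f : ℝ → ℝ) (x : ℝ) : Prop :=
  IsDeltaStationaryPt1 f 0 x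

/-- `g(x) = ∫₀ˣ 2u sin(1/u) du`, with the integrand extended by `0` at `u = 0`. -/
def gEx (x : ℝ) : ℝ := ∫ u in (0 : ℝ)..x, if u = 0 then 0 else 2 * u * Real.sin (1 / u)

/-- `h(x) = x² sin(1/x)` for `x ≠ 0`, `h(0) = 0`. -/
def hEx (x : ℝ) : ℝ := if x = 0 then 0 else x ^ 2 * Real.sin (1 / x)

/-- `f(x) = min {0, h(x)} - g(x) + |x|`. -/
def fEx (x : ℝ) : ℝ := min 0 (hEx x) - gEx x + |x|

/-! Near `x ≠ 0` with `|x| < 1/π`, the part `-g + |·|` of `f` is differentiable with derivative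
`±1 - 2x sin(1/x)`, which has the sign of `±1` since `|2x sin(1/x)| ≤ 2|x| < 1`. The one-sided
derivative of `min {0, h}` vanishes or has that same sign unless `h(x) < 0`; there it is
`h'(x) = 2x sin(1/x) - cos(1/x)`, the `g`-term cancels, and `±1 - cos(1/x) ≠ 0` because
`sin(1/x) ≠ 0`. -/

section MinZero

variable {f : ℝ → ℝ} {x d : ℝ}

theorem hasLeftDeriv_iff_hasDerivWithinAt :
    HasLeftDeriv f x d ↔ HasDerivWithinAt f d (Iio x) x := by
  simp only [HasLeftDeriv, hasDerivWithinAt_iff_tendsto_slope' self_notMem_Iio,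
    slope_fun_def_field]

theorem hasRightDeriv_iff_hasDerivWithinAt :
    HasRightDeriv f x d ↔ HasDerivWithinAt f d (Ioi x) x := by
  simp only [HasRightDeriv, hasDerivWithinAt_iff_tendsto_slope' self_notMem_Ioi,
    slope_fun_def_field]

theorem HasDerivAt.min_zero_of_neg (hf : HasDerivAt f d x) (hx : f x < 0) :
    HasDerivAt (fun y => min 0 (f y)) d x :=
  hf.congr_of_eventuallyEq <|
    (hf.continuousAt.eventually_lt_const hx).mono fun _ hy => min_eq_right hy.le

theorem HasDerivAt.min_zero_of_pos (hf : HasDerivAt f d x) (hx : 0 < f x) :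
    HasDerivAt (fun y => min 0 (f y)) 0 x :=
  (hasDerivAt_const x 0).congr_of_eventuallyEq <|
    (hf.continuousAt.eventually_const_lt hx).mono fun _ hy => min_eq_left hy.le

theorem HasDerivAt.hasDerivWithinAt_Iio_min_zero_of_eq_zero (hf : HasDerivAt f d x)
    (hx : f x = 0) : HasDerivWithinAt (fun y => min 0 (f y)) (max 0 d) (Iio x) x := by
  have hslope := (hasDerivWithinAt_iff_tendsto_slope' self_notMem_Iio).1
    (hf.hasDerivWithinAt (s := Iio x))
  rw [hasDerivWithinAt_iff_tendsto_slope' self_notMem_Iio]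
  refine (((continuous_const.max continuous_id).tendsto d).comp hslope).congr' ?_
  filter_upwards [self_mem_nhdsWithin] with y (hy : y < x)
  simp only [Function.comp_apply, id, slope_def_field, hx, min_self, sub_zero]
  rw [← zero_div (y - x), max_div_div_right_of_nonpos (sub_nonpos.2 hy.le), zero_div]

theorem HasDerivAt.hasDerivWithinAt_Ioi_min_zero_of_eq_zero (hf : HasDerivAt f d x)
    (hx : f x = 0) : HasDerivWithinAt (fun y => min 0 (f y)) (min 0 d) (Ioi x) x := by
  have hslope := (hasDerivWithinAt_iff_tendsto_slope' self_notMem_Ioi).1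
    (hf.hasDerivWithinAt (s := Ioi x))
  rw [hasDerivWithinAt_iff_tendsto_slope' self_notMem_Ioi]
  refine (((continuous_const.min continuous_id).tendsto d).comp hslope).congr' ?_
  filter_upwards [self_mem_nhdsWithin] with y (hy : x < y)
  simp only [Function.comp_apply, id, slope_def_field, hx, min_self, sub_zero]
  rw [← zero_div (y - x), min_div_div_right (sub_nonneg.2 hy.le), zero_div]

theorem HasDerivAt.exists_hasDerivWithinAt_Iio_min_zero (hf : HasDerivAt f d x) :
    ∃ m, HasDerivWithinAt (fun y => min 0 (f y)) m (Iio x) x ∧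
      (0 ≤ m ∨ m = d ∧ f x < 0) := by
  rcases lt_trichotomy (f x) 0 with hneg | hzero | hpos
  · exact ⟨d, (hf.min_zero_of_neg hneg).hasDerivWithinAt, .inr ⟨rfl, hneg⟩⟩
  · exact ⟨_, hf.hasDerivWithinAt_Iio_min_zero_of_eq_zero hzero, .inl (le_max_left 0 d)⟩
  · exact ⟨0, (hf.min_zero_of_pos hpos).hasDerivWithinAt, .inl le_rfl⟩

theorem HasDerivAt.exists_hasDerivWithinAt_Ioi_min_zero (hf : HasDerivAt f d x) :
    ∃ m, HasDerivWithinAt (fun y => min 0 (f y)) m (Ioi x) x ∧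
      (m ≤ 0 ∨ m = d ∧ f x < 0) := by
  rcases lt_trichotomy (f x) 0 with hneg | hzero | hpos
  · exact ⟨d, (hf.min_zero_of_neg hneg).hasDerivWithinAt, .inr ⟨rfl, hneg⟩⟩
  · exact ⟨_, hf.hasDerivWithinAt_Ioi_min_zero_of_eq_zero hzero, .inl (min_le_left 0 d)⟩
  · exact ⟨0, (hf.min_zero_of_pos hpos).hasDerivWithinAt, .inl le_rfl⟩

end MinZero

theorem continuous_gEx_integrand :
    Continuous fun u : ℝ => if u = 0 then 0 else 2 * u * sin (1 / u) := by
  refine continuous_iff_continuousAt.2 fun x => ?_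
  rcases eq_or_ne x 0 with rfl | hx
  · rw [ContinuousAt, if_pos rfl]
    refine squeeze_zero_norm (a := fun u : ℝ => 2 * |u|) (fun u => ?_) ?_
    · split_ifs
      · simp
      · rw [Real.norm_eq_abs, abs_mul, abs_mul, abs_two]
        exact mul_le_of_le_one_right (by positivity) (abs_sin_le_one _)
    · simpa using (continuous_abs.tendsto (0 : ℝ)).const_mul 2
  · refine ContinuousAt.congr ?_ ((eventually_ne_nhds hx).mono fun u hu => (if_neg hu).symm)
    exact (continuousAt_const.mul continuousAt_id).mul
      (continuous_sin.continuousAt.comp (continuousAt_const.div continuousAt_id hx))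

theorem hasDerivAt_gEx {x : ℝ} (hx : x ≠ 0) : HasDerivAt gEx (2 * x * sin (1 / x)) x := by
  have := (continuous_gEx_integrand.integral_hasStrictDerivAt 0 x).hasDerivAt
  rwa [if_neg hx] at this

theorem hEx_of_ne_zero {x : ℝ} (hx : x ≠ 0) : hEx x = x ^ 2 * sin (1 / x) := if_neg hx

theorem hasDerivAt_hEx {x : ℝ} (hx : x ≠ 0) :
    HasDerivAt hEx (2 * x * sin (1 / x) - cos (1 / x)) x := by
  have hsin : HasDerivAt (fun y => sin (1 / y)) (cos (1 / x) * -(x ^ 2)⁻¹) x := by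
    simpa only [one_div] using (hasDerivAt_inv hx).sin
  refine (((hasDerivAt_pow 2 x).mul hsin).congr_deriv ?_).congr_of_eventuallyEq
    ((eventually_ne_nhds hx).mono fun y hy => hEx_of_ne_zero hy)
  field_simp
  ring

theorem abs_two_mul_sin_inv_lt_one {x : ℝ} (hx : |x| < 1 / π) : |2 * x * sin (1 / x)| < 1 :=
  calc |2 * x * sin (1 / x)| ≤ 2 * |x| := by
        rw [abs_mul, abs_mul, abs_two]
        exact mul_le_of_le_one_right (by positivity) (abs_sin_le_one _)
    _ < 2 * (1 / π) := by gcongr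
    _ < 1 := by rw [mul_one_div, div_lt_one pi_pos]; linarith [pi_gt_three]

theorem abs_cos_inv_lt_one_of_hEx_neg {x : ℝ} (hx : hEx x < 0) : |cos (1 / x)| < 1 := by
  have hx0 : x ≠ 0 := by rintro rfl; simp [hEx] at hx
  have hsin : sin (1 / x) ≠ 0 := by
    intro h
    rw [hEx_of_ne_zero hx0, h, mul_zero] at hx
    exact hx.false
  rw [← sq_lt_one_iff_abs_lt_one]
  nlinarith [sin_sq_add_cos_sq (1 / x), sq_pos_of_ne_zero hsin]

theorem exists_hasDerivWithinAt_Iio_fEx_pos {x : ℝ} (hx₀ : 0 < x) (hx₁ : x < 1 / π) :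
    ∃ d, HasDerivWithinAt fEx d (Iio x) x ∧ 0 < d := by
  obtain ⟨m, hm, hm_cases⟩ := (hasDerivAt_hEx hx₀.ne').exists_hasDerivWithinAt_Iio_min_zero
  refine ⟨m - 2 * x * sin (1 / x) + 1,
    (hm.sub (hasDerivAt_gEx hx₀.ne').hasDerivWithinAt).add
      (hasDerivAt_abs_pos hx₀).hasDerivWithinAt, ?_⟩
  have hsin := abs_lt.1 (abs_two_mul_sin_inv_lt_one (by rwa [abs_of_pos hx₀]))
  rcases hm_cases with hm₀ | ⟨rfl, hneg⟩
  · linarith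
  · linarith [(abs_lt.1 (abs_cos_inv_lt_one_of_hEx_neg hneg)).2]

theorem exists_hasDerivWithinAt_Ioi_fEx_neg {x : ℝ} (hx₀ : -(1 / π) < x) (hx₁ : x < 0) :
    ∃ d, HasDerivWithinAt fEx d (Ioi x) x ∧ d < 0 := by
  obtain ⟨m, hm, hm_cases⟩ := (hasDerivAt_hEx hx₁.ne).exists_hasDerivWithinAt_Ioi_min_zero
  refine ⟨m - 2 * x * sin (1 / x) + -1,
    (hm.sub (hasDerivAt_gEx hx₁.ne).hasDerivWithinAt).add
      (hasDerivAt_abs_neg hx₁).hasDerivWithinAt, ?_⟩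
  have hsin := abs_lt.1 (abs_two_mul_sin_inv_lt_one (by rw [abs_of_neg hx₁]; linarith))
  rcases hm_cases with hm₀ | ⟨rfl, hneg⟩
  · linarith
  · linarith [(abs_lt.1 (abs_cos_inv_lt_one_of_hEx_neg hneg)).1]

/-- On `(0, 1/π)` the left derivative of `f` exists and is positive; on `(-1/π, 0)`
the right derivative exists and is negative; consequently `f` has no stationary
point in `(-1/π, 1/π) \ {0}`. -/
theorem fEx_no_stationary_off_zero :
    (∀ x ∈ Set.Ioo (0 : ℝ) (1 / Real.pi), ∃ d : ℝ, HasLeftDeriv fEx x d ∧ 0 < d) ∧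
    (∀ x ∈ Set.Ioo (-(1 / Real.pi)) (0 : ℝ), ∃ d : ℝ, HasRightDeriv fEx x d ∧ d < 0) ∧
    (∀ x ∈ Set.Ioo (-(1 / Real.pi)) (1 / Real.pi), x ≠ 0 → ¬ IsStationaryPt1 fEx x) := by
  have hleft : ∀ x ∈ Ioo (0 : ℝ) (1 / π), ∃ d, HasLeftDeriv fEx x d ∧ 0 < d := by
    rintro x ⟨hx₀, hx₁⟩
    simpa only [hasLeftDeriv_iff_hasDerivWithinAt] using
      exists_hasDerivWithinAt_Iio_fEx_pos hx₀ hx₁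
  have hright : ∀ x ∈ Ioo (-(1 / π)) 0, ∃ d, HasRightDeriv fEx x d ∧ d < 0 := by
    rintro x ⟨hx₀, hx₁⟩
    simpa only [hasRightDeriv_iff_hasDerivWithinAt] using
      exists_hasDerivWithinAt_Ioi_fEx_neg hx₀ hx₁
  refine ⟨hleft, hright, ?_⟩
  rintro x ⟨hx₀, hx₁⟩ hx ⟨dm, dp, hdm, hdp, hdm_le, hdp_ge⟩
  rcases hx.lt_or_gt with hneg | hpos
  · obtain ⟨d, hd, hd_neg⟩ := hright x ⟨hx₀, hneg⟩
    linarith [tendsto_nhds_unique hdp hd]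
  · obtain ⟨d, hd, hd_pos⟩ := hleft x ⟨hpos, hx₁⟩
    linarith [tendsto_nhds_unique hdm hd]
end
end

section
/- Define f : ℝ → ℝ by f(x) := min{0, h(x)} − g(x) + |x|, where g(x) := ∫₀ˣ 2u·sin(1/u) du (integrand understood as 0 at u = 0) and h(x) := x²·sin(1/x) for x ≠ 0, h(0) := 0. Then f′₊(0) = 1 and f′₋(0) = −1; in particular x* = 0 is a stationary point of f, and 0 is an isolated local minimum point of f: f(0) < f(x) for every x ∈ (−1/π, 1/π) with x ≠ 0. -/
open Filter Metric Set Real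

noncomputable section

open Asymptotics Topology

/- Both `min 0 h` and `g` are `O(x²)` near `0`, so `f = |·| + O(x²)`: the one-sided
difference quotients of `f` at `0` tend to `±1`, and `f x ≥ |x| - 3x² > 0` for `0 < |x| < 1/3`,
in particular for `0 < |x| < 1/π`. -/

lemma abs_intervalIntegral_zero_le_of_abs_le {φ : ℝ → ℝ} {C : ℝ} (hφ : ∀ u, |φ u| ≤ C * |u|)
    (x : ℝ) : |∫ u in (0 : ℝ)..x, φ u| ≤ C * x ^ 2 := by
  have hC : 0 ≤ C := by simpa using (abs_nonneg _).trans (hφ 1)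
  have hbound : ∀ u ∈ uIoc 0 x, ‖φ u‖ ≤ C * |x| := fun u hu => by
    have hux : |u - 0| ≤ |x - 0| := Set.abs_sub_left_of_mem_uIcc (uIoc_subset_uIcc hu)
    simp only [sub_zero] at hux
    exact (hφ u).trans (mul_le_mul_of_nonneg_left hux hC)
  calc |∫ u in (0 : ℝ)..x, φ u| ≤ C * |x| * |x - 0| :=
        intervalIntegral.norm_integral_le_of_norm_le_const hbound
    _ = C * x ^ 2 := by rw [sub_zero, mul_assoc, abs_mul_abs_self, sq]

lemma abs_gEx_le (x : ℝ) : |gEx x| ≤ 2 * x ^ 2 := by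
  refine abs_intervalIntegral_zero_le_of_abs_le (fun u => ?_) x
  split_ifs
  · rw [abs_zero]; positivity
  · rw [abs_mul, abs_mul, abs_two]
    exact mul_le_of_le_one_right (by positivity) (abs_sin_le_one _)

lemma abs_hEx_le (x : ℝ) : |hEx x| ≤ x ^ 2 := by
  unfold hEx
  split_ifs
  · rw [abs_zero]; positivity
  · rw [abs_mul, abs_of_nonneg (sq_nonneg x)]
    exact mul_le_of_le_one_right (sq_nonneg x) (abs_sin_le_one _)

lemma abs_fEx_sub_abs_le (x : ℝ) : |(fEx x - |x|)| ≤ 3 * x ^ 2 := by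
  have hmin : |min 0 (hEx x)| ≤ x ^ 2 :=
    abs_min_le_max_abs_abs.trans (by simpa using abs_hEx_le x)
  calc |(fEx x - |x|)| = |min 0 (hEx x) - gEx x| := by simp [fEx]
    _ ≤ |min 0 (hEx x)| + |gEx x| := abs_sub _ _
    _ ≤ 3 * x ^ 2 := by linarith [abs_gEx_le x]

section AbsPlusQuadratic

variable {F : ℝ → ℝ} {C : ℝ}

lemma eq_zero_of_abs_sub_abs_le (hF : ∀ x, |(F x - |x|)| ≤ C * x ^ 2) : F 0 = 0 := by
  simpa using hF 0

lemma tendsto_sub_abs_div_nhds_zero (hF : ∀ x, |(F x - |x|)| ≤ C * x ^ 2) :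
    Tendsto (fun y => (F y - |y|) / y) (𝓝 0) (𝓝 0) := by
  have hbigO : (fun y => F y - |y|) =O[𝓝 0] (fun y : ℝ => y ^ 2) :=
    IsBigO.of_bound C (Eventually.of_forall fun y => by simpa using hF y)
  exact (hbigO.trans_isLittleO (isLittleO_pow_id one_lt_two)).tendsto_div_nhds_zero

lemma tendsto_slope_zero_of_abs_sub_abs_le (hF : ∀ x, |(F x - |x|)| ≤ C * x ^ 2) {s : Set ℝ}
    (h0 : 0 ∉ s) {c : ℝ} (hs : ∀ y ∈ s, |y| = c * y) :
    Tendsto (fun y => (F y - F 0) / (y - 0)) (𝓝[s] 0) (𝓝 c) := by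
  have hlim := ((tendsto_sub_abs_div_nhds_zero hF).mono_left
    (nhdsWithin_le_nhds (s := s))).add_const c
  rw [zero_add] at hlim
  refine hlim.congr' (eventually_nhdsWithin_of_forall fun y hy => ?_)
  have hy0 : y ≠ 0 := ne_of_mem_of_not_mem hy h0
  rw [eq_zero_of_abs_sub_abs_le hF, hs y hy]
  field_simp
  ring

lemma hasRightDeriv_zero_of_abs_sub_abs_le (hF : ∀ x, |(F x - |x|)| ≤ C * x ^ 2) :
    HasRightDeriv F 0 1 :=
  tendsto_slope_zero_of_abs_sub_abs_le hF (s := Ioi 0) (by simp) fun y hy => by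
    rw [abs_of_pos (mem_Ioi.mp hy), one_mul]

lemma hasLeftDeriv_zero_of_abs_sub_abs_le (hF : ∀ x, |(F x - |x|)| ≤ C * x ^ 2) :
    HasLeftDeriv F 0 (-1) :=
  tendsto_slope_zero_of_abs_sub_abs_le hF (s := Iio 0) (by simp) fun y hy => by
    rw [abs_of_neg (mem_Iio.mp hy), neg_one_mul]

lemma pos_of_abs_sub_abs_le {x : ℝ} (hF : |(F x - |x|)| ≤ C * x ^ 2) (hx : x ≠ 0)
    (hCx : C * |x| < 1) : 0 < F x := by
  have hlow : |x| * (1 - C * |x|) ≤ F x := by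
    have hsq : x ^ 2 = |x| * |x| := by rw [abs_mul_abs_self, sq]
    have hlow := (abs_le.mp hF).1
    rw [hsq] at hlow
    linarith
  exact lt_of_lt_of_le (mul_pos (abs_pos.mpr hx) (by linarith)) hlow

end AbsPlusQuadratic

/-- `f′₊(0) = 1` and `f′₋(0) = -1`; in particular `0` is a stationary point of `f`,
and `0` is an isolated local minimum point: `f 0 < f x` for every
`x ∈ (-1/π, 1/π)` with `x ≠ 0`. -/
theorem fEx_zero_isolated_local_min :
    HasRightDeriv fEx 0 1 ∧ HasLeftDeriv fEx 0 (-1) ∧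
    IsStationaryPt1 fEx 0 ∧
    (∀ x ∈ Set.Ioo (-(1 / Real.pi)) (1 / Real.pi), x ≠ 0 → fEx 0 < fEx x) := by
  have hright := hasRightDeriv_zero_of_abs_sub_abs_le abs_fEx_sub_abs_le
  have hleft := hasLeftDeriv_zero_of_abs_sub_abs_le abs_fEx_sub_abs_le
  refine ⟨hright, hleft, ⟨-1, 1, hleft, hright, by norm_num, by norm_num⟩, fun x hx hx0 => ?_⟩
  have hx_lt : |x| < 1 / 3 := by
    have hπ : 1 / π < 1 / 3 := one_div_lt_one_div_of_lt (by norm_num) pi_gt_three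
    exact (abs_lt.mpr hx).trans hπ
  rw [eq_zero_of_abs_sub_abs_le abs_fEx_sub_abs_le]
  exact pos_of_abs_sub_abs_le (abs_fEx_sub_abs_le x) hx0 (by linarith)
end
end

section
/- Define f : ℝ → ℝ by f(x) := min{0, h(x)} − g(x) + |x|, where g(x) := ∫₀ˣ 2u·sin(1/u) du (integrand understood as 0 at u = 0) and h(x) := x²·sin(1/x) for x ≠ 0, h(0) := 0. Then for every integer k ≥ 1 and every t ∈ (0, π), f is differentiable at the point 1/(2kπ − t) with f′(1/(2kπ − t)) = 1 − cos(t), and consequently f′(1/(2kπ − t)) ≤ t²/2. -/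
open Filter Metric Set Real

noncomputable section

/-! Near `x₀ = 1/(2kπ - t)` we have `sin (1/x) < 0`, so there `f(x) = x² sin(1/x) - g(x) + x`.
Its derivative is `2x sin(1/x) - cos(1/x) - 2x sin(1/x) + 1`: the oscillating term of `h'` is
cancelled exactly by `g' = 2x sin(1/x)`, leaving `1 - cos(1/x₀) = 1 - cos t`. -/

theorem continuous_ite_mul_sin_inv (c : ℝ) :
    Continuous fun u : ℝ => if u = 0 then 0 else c * u * sin (1 / u) := by
  refine continuous_iff_continuousAt.2 fun x => ?_
  rcases eq_or_ne x 0 with rfl | hx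
  · have hbound : ∀ u : ℝ, ‖if u = 0 then 0 else c * u * sin (1 / u)‖ ≤ |c| * |u| := by
      intro u
      split_ifs
      · simp only [norm_zero]; positivity
      · simpa [abs_mul, mul_assoc] using
          mul_le_mul_of_nonneg_left (abs_sin_le_one (1 / u)) (by positivity : 0 ≤ |c| * |u|)
    have hlim : Tendsto (fun u : ℝ => |c| * |u|) (nhds 0) (nhds 0) :=
      (by fun_prop : Continuous fun u : ℝ => |c| * |u|).tendsto' 0 0 (by simp)
    simpa [ContinuousAt] using squeeze_zero_norm hbound hlim
  · have hsmooth : ContinuousAt (fun u : ℝ => c * u * sin (1 / u)) x := by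
      fun_prop (disch := exact hx)
    refine hsmooth.congr ?_
    filter_upwards [isOpen_ne.mem_nhds hx] with u hu
    simp [hu]

theorem hasDerivAt_sq_mul_sin_inv {x : ℝ} (hx : x ≠ 0) :
    HasDerivAt (fun y : ℝ => y ^ 2 * sin (1 / y)) (2 * x * sin (1 / x) - cos (1 / x)) x := by
  have hinv : HasDerivAt (fun y : ℝ => 1 / y) (-(x ^ 2)⁻¹) x := by
    simpa [one_div] using hasDerivAt_inv hx
  refine ((hasDerivAt_pow 2 x).mul hinv.sin).congr_deriv ?_
  field_simp
  ring

theorem fEx_eventuallyEq_of_sin_inv_neg {x : ℝ} (hx : 0 < x) (hsin : sin (1 / x) < 0) :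
    fEx =ᶠ[nhds x] fun y => y ^ 2 * sin (1 / y) - gEx y + y := by
  have hcont : ContinuousAt (fun y : ℝ => sin (1 / y)) x := by fun_prop (disch := exact hx.ne')
  have hsin_near : ∀ᶠ y in nhds x, sin (1 / y) < 0 := hcont.eventually_lt_const hsin
  filter_upwards [eventually_gt_nhds hx, hsin_near] with y hy hsy
  have hneg : y ^ 2 * sin (1 / y) ≤ 0 := mul_nonpos_of_nonneg_of_nonpos (sq_nonneg y) hsy.le
  simp only [fEx, hEx, if_neg hy.ne', min_eq_right hneg, abs_of_pos hy]

theorem hasDerivAt_fEx_of_sin_inv_neg {x : ℝ} (hx : 0 < x) (hsin : sin (1 / x) < 0) :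
    HasDerivAt fEx (1 - cos (1 / x)) x := by
  have hsmooth :=
    ((hasDerivAt_sq_mul_sin_inv hx.ne').sub (hasDerivAt_gEx hx.ne')).add (hasDerivAt_id x)
  refine (hsmooth.congr_deriv ?_).congr_of_eventuallyEq (fEx_eventuallyEq_of_sin_inv_neg hx hsin)
  ring

/-- For every integer `k ≥ 1` and `t ∈ (0, π)`, `f` is differentiable at
`1/(2kπ - t)` with `f′(1/(2kπ - t)) = 1 - cos t`, and `1 - cos t ≤ t²/2`. -/
theorem fEx_deriv_near_kink :
    ∀ k : ℕ, 1 ≤ k → ∀ t ∈ Set.Ioo (0 : ℝ) Real.pi,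
      HasDerivAt fEx (1 - Real.cos t) (1 / (2 * k * Real.pi - t)) ∧
      1 - Real.cos t ≤ t ^ 2 / 2 := by
  intro k hk t ⟨ht0, htπ⟩
  have hk1 : (1 : ℝ) ≤ k := by exact_mod_cast hk
  have hpos : 0 < 2 * k * π - t := by nlinarith [pi_pos]
  have hperiod : 2 * k * π - t = -t + (k : ℤ) * (2 * π) := by push_cast; ring
  have hsin : sin (2 * k * π - t) = -sin t := by
    rw [hperiod, sin_add_int_mul_two_pi, sin_neg]
  have hcos : cos (2 * k * π - t) = cos t := by
    rw [hperiod, cos_add_int_mul_two_pi, cos_neg]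
  have hderiv := hasDerivAt_fEx_of_sin_inv_neg (one_div_pos.2 hpos)
    (by rw [one_div_one_div, hsin]; linarith [sin_pos_of_pos_of_lt_pi ht0 htπ])
  rw [one_div_one_div, hcos] at hderiv
  exact ⟨hderiv, by linarith [one_sub_sq_div_two_le_cos (x := t)]⟩
end
end

section
/- Quantitative sufficiency for convergence stability: Let Ω ⊆ ℝⁿ be compact and convex, let f : Ω → ℝ be continuous, and let x* ∈ Ω and r > 0 be such that f(x*) < f(x) for every x ∈ B(x*, r) ∩ Ω with x ≠ x*. Assume the annulus A := {x ∈ Ω : 0.8r ≤ ‖x − x*‖ ≤ 0.9r} is nonempty, and assume that for every ε > 0 there exists δ₀ > 0 such that every δ₀-stationary point of f in B(x*, r) ∩ Ω lies in B(x*, ε). Define λ₀ := (1/2)(min_{x ∈ A} f(x) − f(x*)) and r₁ := sup{r′ ∈ (0, 0.8r] : f(x) ≤ f(x*) + λ₀ for all x ∈ B(x*, r′) ∩ Ω}. Then λ₀ > 0, r₁ > 0, and x* is (r₁, λ₀)-convergence-stable. -/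
open Filter Metric Set

noncomputable section

/-- The one-sided directional derivative `∂f(x)/∂s = d`. -/
def HasDirDeriv {E : Type*} [NormedAddCommGroup E] [NormedSpace ℝ E]
    (f : E → ℝ) (x s : E) (d : ℝ) : Prop :=
  Filter.Tendsto (fun α : ℝ => (f (x + α • s) - f x) / ‖α • s‖)
    (nhdsWithin 0 (Set.Ioi 0)) (nhds d)

/-- `x` is a `δ`-stationary point of `f` on `Ω`. -/
def IsDeltaStationaryPt {E : Type*} [NormedAddCommGroup E] [NormedSpace ℝ E]
    (Ω : Set E) (f : E → ℝ) (δ : ℝ) (x : E) : Prop :=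
  x ∈ Ω ∧ ∀ x' ∈ Ω, x' ≠ x → ∃ d : ℝ, HasDirDeriv f x (x' - x) d ∧ -δ ≤ d

/-- A stationary point is a `0`-stationary point. -/
def IsStationaryPt {E : Type*} [NormedAddCommGroup E] [NormedSpace ℝ E]
    (Ω : Set E) (f : E → ℝ) (x : E) : Prop :=
  IsDeltaStationaryPt Ω f 0 x

/-- Every limit point `x̄` of the sequence satisfies `f x̄ ≤ f x₀`. -/
def UltimatelyDecreasing {E : Type*} [NormedAddCommGroup E] [NormedSpace ℝ E]
    (f : E → ℝ) (x : ℕ → E) : Prop :=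
  ∀ y : E, MapClusterPt y Filter.atTop x → f y ≤ f (x 0)

/-- Every limit point of the sequence is a `δ`-stationary point of `f` on `Ω`. -/
def ResultStationary {E : Type*} [NormedAddCommGroup E] [NormedSpace ℝ E]
    (Ω : Set E) (f : E → ℝ) (δ : ℝ) (x : ℕ → E) : Prop :=
  ∀ y : E, MapClusterPt y Filter.atTop x → IsDeltaStationaryPt Ω f δ y

/-- `f (θ x_{k+1} + (1-θ) x_k) ≤ f x₀ + λ` for all `k` and `θ ∈ [0,1]`. -/
def PathBounded {E : Type*} [NormedAddCommGroup E] [NormedSpace ℝ E]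
    (f : E → ℝ) (lam : ℝ) (x : ℕ → E) : Prop :=
  ∀ k : ℕ, ∀ θ ∈ Set.Icc (0 : ℝ) 1,
    f (θ • x (k + 1) + (1 - θ) • x k) ≤ f (x 0) + lam

/-- `x*` is `(r₀, λ)`-convergence-stable on `Ω`. -/
def ConvergenceStable {E : Type*} [NormedAddCommGroup E] [NormedSpace ℝ E]
    (Ω : Set E) (f : E → ℝ) (xs : E) (r₀ lam : ℝ) : Prop :=
  ∀ ε > 0, ∃ δ > 0, ∀ δ₁ ∈ Set.Ioo 0 δ, ∀ lam₁ ∈ Set.Ioo 0 lam,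
    ∀ x : ℕ → E, (∀ k, x k ∈ Ω) → x 0 ∈ Metric.ball xs r₀ ∩ Ω →
      UltimatelyDecreasing f x → ResultStationary Ω f δ₁ x → PathBounded f lam₁ x →
      Filter.limsup (fun k => ‖x k - xs‖) Filter.atTop < ε

set_option maxHeartbeats 1000000 in
/-- **Quantitative sufficiency for convergence stability.** Let `Ω ⊆ ℝⁿ` be compact
convex, `f` continuous on `Ω`, and let `x*` be a strict (isolated) minimum point on
`B(x*, r) ∩ Ω`. Assume the annulus `A = {x ∈ Ω : 0.8r ≤ ‖x - x*‖ ≤ 0.9r}` is nonempty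
and that `δ₀`-stationary points in `B(x*, r) ∩ Ω` are eventually confined near `x*`.
With `λ₀ = (min_A f - f x*)/2` and
`r₁ = sup {r' ∈ (0, 0.8r] : f ≤ f x* + λ₀ on B(x*, r') ∩ Ω}`, we have `λ₀ > 0`,
`r₁ > 0`, and `x*` is `(r₁, λ₀)`-convergence-stable. -/
theorem quantitative_convergence_stable {n : ℕ}
    (Ω : Set (EuclideanSpace ℝ (Fin n)))
    (hΩc : IsCompact Ω) (hΩconv : Convex ℝ Ω)
    (f : EuclideanSpace ℝ (Fin n) → ℝ) (hf : ContinuousOn f Ω)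
    (xs : EuclideanSpace ℝ (Fin n)) (hxs : xs ∈ Ω)
    (r : ℝ) (hr : 0 < r)
    (hmin : ∀ x ∈ Metric.ball xs r ∩ Ω, x ≠ xs → f xs < f x)
    (hA : {x | x ∈ Ω ∧ 0.8 * r ≤ ‖x - xs‖ ∧ ‖x - xs‖ ≤ 0.9 * r}.Nonempty)
    (hconv : ∀ ε > 0, ∃ δ₀ > 0, ∀ x ∈ Metric.ball xs r ∩ Ω,
      IsDeltaStationaryPt Ω f δ₀ x → x ∈ Metric.ball xs ε) :
    0 < (sInf (f '' {x | x ∈ Ω ∧ 0.8 * r ≤ ‖x - xs‖ ∧ ‖x - xs‖ ≤ 0.9 * r}) - f xs) / 2 ∧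
    0 < sSup {r' : ℝ | r' ∈ Set.Ioc 0 (0.8 * r) ∧ ∀ x ∈ Metric.ball xs r' ∩ Ω,
      f x ≤ f xs + (sInf (f '' {x | x ∈ Ω ∧ 0.8 * r ≤ ‖x - xs‖ ∧ ‖x - xs‖ ≤ 0.9 * r}) - f xs) / 2} ∧
    ConvergenceStable Ω f xs
      (sSup {r' : ℝ | r' ∈ Set.Ioc 0 (0.8 * r) ∧ ∀ x ∈ Metric.ball xs r' ∩ Ω,
        f x ≤ f xs + (sInf (f '' {x | x ∈ Ω ∧ 0.8 * r ≤ ‖x - xs‖ ∧ ‖x - xs‖ ≤ 0.9 * r}) - f xs) / 2})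
      ((sInf (f '' {x | x ∈ Ω ∧ 0.8 * r ≤ ‖x - xs‖ ∧ ‖x - xs‖ ≤ 0.9 * r}) - f xs) / 2) := by
  
  -- Abbreviations
  set A := {x | x ∈ Ω ∧ 0.8 * r ≤ ‖x - xs‖ ∧ ‖x - xs‖ ≤ 0.9 * r} with hAdef
  have h89 : (0.8 : ℝ) * r ≤ 0.9 * r := by nlinarith
  have h9r : (0.9 : ℝ) * r < r := by nlinarith
  have h8r : (0.8 : ℝ) * r < r := by nlinarith
  have h8pos : (0 : ℝ) < 0.8 * r := by nlinarith
  -- A is compact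
  have hAsub : A ⊆ Ω := fun x hx => hx.1
  have hAcomp : IsCompact A := by
    have hAeq : A = Ω ∩ ((fun x => ‖x - xs‖) ⁻¹' Set.Icc (0.8 * r) (0.9 * r)) := by
      ext x
      simp only [hAdef, Set.mem_setOf_eq, Set.mem_inter_iff, Set.mem_preimage, Set.mem_Icc,
        and_assoc]
    rw [hAeq]
    exact hΩc.inter_right (IsClosed.preimage (by continuity) isClosed_Icc)
  obtain ⟨a, haA, hamin⟩ := hAcomp.exists_isMinOn hA (hf.mono hAsub)
  have hInf : sInf (f '' A) = f a :=
    IsLeast.csInf_eq ⟨⟨a, haA, rfl⟩, by rintro _ ⟨y, hy, rfl⟩; exact hamin hy⟩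
  rw [hInf]
  set lam₀ := (f a - f xs) / 2 with hlamdef
  -- λ₀ > 0
  have hane : a ≠ xs := by
    intro h
    have := haA.2.1
    rw [h, sub_self, norm_zero] at this
    nlinarith
  have hfa : f xs < f a := by
    refine hmin a ⟨?_, haA.1⟩ hane
    rw [Metric.mem_ball, dist_eq_norm]
    exact lt_of_le_of_lt haA.2.2 h9r
  have hlampos : 0 < lam₀ := by rw [hlamdef]; linarith
  refine ⟨hlampos, ?_⟩
  set S := {r' : ℝ | r' ∈ Set.Ioc 0 (0.8 * r) ∧
    ∀ x ∈ Metric.ball xs r' ∩ Ω, f x ≤ f xs + lam₀} with hSdef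
  -- S is nonempty and bounded above
  obtain ⟨δc, hδcpos, hδc⟩ := Metric.continuousWithinAt_iff.mp (hf xs hxs) lam₀ hlampos
  have hr0S : min δc (0.8 * r) ∈ S := by
    constructor
    · exact ⟨lt_min hδcpos h8pos, min_le_right _ _⟩
    · rintro x ⟨hxb, hxΩ⟩
      have hd : dist x xs < δc := lt_of_lt_of_le (Metric.mem_ball.mp hxb) (min_le_left _ _)
      have := hδc hxΩ hd
      rw [Real.dist_eq] at this
      have := abs_lt.mp this
      linarith [this.1, this.2]
  have hSne : S.Nonempty := ⟨_, hr0S⟩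
  have hSbdd : BddAbove S := ⟨0.8 * r, fun r' hr' => hr'.1.2⟩
  have hr1pos : 0 < sSup S :=
    lt_of_lt_of_le (lt_min hδcpos h8pos) (le_csSup hSbdd hr0S)
  have hr1le : sSup S ≤ 0.8 * r := csSup_le hSne fun r' hr' => hr'.1.2
  refine ⟨hr1pos, ?_⟩
  -- Convergence stability
  intro ε hε
  obtain ⟨δ₀, hδ₀pos, hδ₀⟩ := hconv (ε / 2) (by linarith)
  refine ⟨δ₀, hδ₀pos, ?_⟩
  rintro δ₁ hδ₁ lam₁ hlam₁ x hxΩ ⟨hx0b, hx0Ω⟩ _hud hrs hpb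
  -- f (x 0) ≤ f xs + λ₀
  have hx0norm : ‖x 0 - xs‖ < sSup S := by
    rw [← dist_eq_norm]; exact Metric.mem_ball.mp hx0b
  obtain ⟨r', hr'S, hr'lt⟩ := exists_lt_of_lt_csSup hSne hx0norm
  have hfx0 : f (x 0) ≤ f xs + lam₀ :=
    hr'S.2 (x 0) ⟨Metric.mem_ball.mpr (by rw [dist_eq_norm]; exact hr'lt), hx0Ω⟩
  -- all iterates stay in the ball of radius 0.8 r
  have hin : ∀ k, ‖x k - xs‖ < 0.8 * r := by
    intro k
    induction k with
    | zero => exact lt_of_lt_of_le hx0norm hr1le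
    | succ k ih =>
      by_contra hge
      push_neg at hge
      have hgc : Continuous (fun θ : ℝ => ‖θ • x (k + 1) + (1 - θ) • x k - xs‖) :=
        (((continuous_id.smul continuous_const).add
          ((continuous_const.sub continuous_id).smul continuous_const)).sub
            continuous_const).norm
      have hmem : (0.8 * r) ∈ Set.Icc
          (‖(0 : ℝ) • x (k + 1) + (1 - (0 : ℝ)) • x k - xs‖)
          (‖(1 : ℝ) • x (k + 1) + (1 - (1 : ℝ)) • x k - xs‖) := by
        constructor
        · simp only [zero_smul, sub_zero, one_smul, zero_add]; exact ih.le
        · simp only [one_smul, sub_self, zero_smul, add_zero]; exact hge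
      obtain ⟨θ, hθ, hgθ⟩ :=
        intermediate_value_Icc (zero_le_one (α := ℝ)) hgc.continuousOn hmem
      have hyΩ : θ • x (k + 1) + (1 - θ) • x k ∈ Ω :=
        hΩconv (hxΩ (k + 1)) (hxΩ k) hθ.1 (by linarith [hθ.2]) (by ring)
      have hyA : θ • x (k + 1) + (1 - θ) • x k ∈ A :=
        ⟨hyΩ, le_of_eq hgθ.symm, hgθ.le.trans h89⟩
      have h1 : f a ≤ f (θ • x (k + 1) + (1 - θ) • x k) := hamin hyA
      have h2 := hpb k θ hθ
      have := hlam₁.2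
      rw [hlamdef] at this hfx0
      linarith
  -- eventually within ε/2 of xs
  have hev : ∀ᶠ k in atTop, ‖x k - xs‖ ≤ ε / 2 := by
    by_contra hcon
    rw [Filter.not_eventually] at hcon
    have hfr : ∃ᶠ k in atTop, ε / 2 < ‖x k - xs‖ := hcon.mono fun k hk => lt_of_not_ge hk
    obtain ⟨φ, hφmono, hφ⟩ := extraction_of_frequently_atTop hfr
    obtain ⟨y, hyΩ, ψ, hψmono, htend⟩ := hΩc.tendsto_subseq (x := x ∘ φ) fun n => hxΩ (φ n)
    have htendn : Tendsto (fun m => ‖(x ∘ φ ∘ ψ) m - xs‖) atTop (nhds ‖y - xs‖) :=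
      (htend.sub tendsto_const_nhds).norm
    have hy8 : ‖y - xs‖ ≤ 0.8 * r :=
      le_of_tendsto' htendn fun m => (hin (φ (ψ m))).le
    have hylow : ε / 2 ≤ ‖y - xs‖ :=
      ge_of_tendsto' htendn fun m => (hφ (ψ m)).le
    have hcl : MapClusterPt y atTop x := by
      refine MapClusterPt.of_comp ((hφmono.comp hψmono).tendsto_atTop) ?_
      exact htend.mapClusterPt
    have hstat := hrs y hcl
    have hstat0 : IsDeltaStationaryPt Ω f δ₀ y := by
      refine ⟨hstat.1, fun x' hx' hne => ?_⟩
      obtain ⟨d, hd, hdge⟩ := hstat.2 x' hx' hne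
      exact ⟨d, hd, by linarith [hδ₁.1, hδ₁.2]⟩
    have hball : y ∈ Metric.ball xs r := by
      rw [Metric.mem_ball, dist_eq_norm]
      exact lt_of_le_of_lt hy8 h8r
    have := hδ₀ y ⟨hball, hyΩ⟩ hstat0
    rw [Metric.mem_ball, dist_eq_norm] at this
    linarith
  -- conclude on the limsup
  have hle : Filter.limsup (fun k => ‖x k - xs‖) Filter.atTop ≤ ε / 2 :=
    Filter.limsup_le_of_le (Filter.isCoboundedUnder_le_of_le atTop fun k => norm_nonneg _) hev
  linarith
end
end

section
/- Let f(x) = |x + 1| + |x − 1| on Ω = [−2, 2]. Then x* = 0 is a stationary point of f, but 0 is not convergence-stable: for every r₀ > 0 and every λ > 0, the point 0 is not (r₀, λ)-convergence-stable. -/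
open Filter Metric Set

noncomputable section

lemma f_two {y : ℝ} (h1 : -1 ≤ y) (h2 : y ≤ 1) : |y + 1| + |y - 1| = 2 := by
  rw [abs_of_nonneg (by linarith), abs_of_nonpos (by linarith)]; ring

lemma cluster_eq {x : ℕ → ℝ} {a y : ℝ} (hx : Tendsto x atTop (nhds a))
    (hy : MapClusterPt y atTop x) : y = a := by
  have h1 : ClusterPt y (nhds a) := hy.clusterPt.mono hx
  exact eq_of_nhds_neBot h1

/-- directional derivative 0 when f is locally constant = 2 along the ray -/
lemma dirderiv_zero {x s : ℝ} (c : ℝ) (hc : 0 < c)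
    (h : ∀ α ∈ Set.Ioo (0:ℝ) c, -1 ≤ x + α * s ∧ x + α * s ≤ 1)
    (hx : |x + 1| + |x - 1| = 2) :
    HasDirDeriv (fun y => |y + 1| + |y - 1|) x s 0 := by
  unfold HasDirDeriv
  apply Filter.Tendsto.congr' _ tendsto_const_nhds
  filter_upwards [Ioo_mem_nhdsGT_of_mem (by constructor <;> simp [hc] : (0:ℝ) ∈ Set.Ico 0 c)]
    with α hα
  obtain ⟨h1, h2⟩ := h α hα
  simp only [smul_eq_mul]
  rw [f_two h1 h2, hx]
  simp

lemma stationary_one {δ : ℝ} (hδ : 0 ≤ δ) :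
    IsDeltaStationaryPt (Set.Icc (-2 : ℝ) 2) (fun x => |x + 1| + |x - 1|) δ 1 := by
  constructor
  · constructor <;> norm_num
  · intro x' hx' hne
    rcases lt_or_gt_of_ne hne with hlt | hgt
    · -- x' < 1 : derivative 0
      refine ⟨0, ?_, by linarith⟩
      apply dirderiv_zero (1/2) (by norm_num)
      · intro α hα
        have hs1 : -3 ≤ x' - 1 := by have := hx'.1; linarith
        have hs2 : x' - 1 < 0 := by linarith
        constructor
        · nlinarith [hα.1, hα.2]
        · nlinarith [hα.1, hα.2]
      · norm_num
    · -- x' > 1 : derivative 2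
      refine ⟨2, ?_, by linarith⟩
      unfold HasDirDeriv
      apply Filter.Tendsto.congr' _ tendsto_const_nhds
      filter_upwards [self_mem_nhdsWithin] with α (hα : 0 < α)
      have hs : 0 < x' - 1 := by linarith
      have has : 0 < α * (x' - 1) := mul_pos hα hs
      simp only [smul_eq_mul]
      symm
      rw [Real.norm_eq_abs, abs_of_pos has]
      have e1 : |1 + α * (x' - 1) + 1| = 2 + α * (x' - 1) := by
        rw [abs_of_pos (by linarith)]; ring
      have e2 : |1 + α * (x' - 1) - 1| = α * (x' - 1) := by
        rw [show (1 : ℝ) + α * (x' - 1) - 1 = α * (x' - 1) by ring, abs_of_pos has]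
      rw [e1, e2]
      rw [show (2 : ℝ) + α * (x' - 1) + α * (x' - 1) - (|(1:ℝ) + 1| + |(1:ℝ) - 1|)
            = 2 * (α * (x' - 1)) by norm_num; ring]
      field_simp

/-- For `f(x) = |x + 1| + |x - 1|` on `Ω = [-2, 2]`, the point `0` is a stationary
point but it is not convergence-stable: for every `r₀ > 0` and `λ > 0` it is not
`(r₀, λ)`-convergence-stable. -/
theorem abs_sum_zero_not_convergence_stable :
    IsStationaryPt (Set.Icc (-2 : ℝ) 2) (fun x => |x + 1| + |x - 1|) 0 ∧
    ∀ r₀ > 0, ∀ lam > 0,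
      ¬ ConvergenceStable (Set.Icc (-2 : ℝ) 2) (fun x => |x + 1| + |x - 1|) 0 r₀ lam := by
  constructor
  · -- stationarity of 0
    refine ⟨by constructor <;> norm_num, fun x' hx' hne => ⟨0, ?_, by norm_num⟩⟩
    have h := dirderiv_zero (x := 0) (s := x' - 0) (1/4) (by norm_num) ?_ (by norm_num)
    · exact h
    · intro α hα
      have h1 := hx'.1
      have h2 := hx'.2
      constructor
      · nlinarith [hα.1, hα.2]
      · nlinarith [hα.1, hα.2]
  · -- not convergence stable
    intro r₀ hr₀ lam hlam hcs
    obtain ⟨δ, hδ, H⟩ := hcs (1/2) (by norm_num)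
    set x : ℕ → ℝ := fun k => if k = 0 then 0 else 1 with hxdef
    have hx0 : x 0 = 0 := rfl
    have hx1 : ∀ k, 1 ≤ k → x k = 1 := by
      intro k hk
      simp [hxdef, Nat.one_le_iff_ne_zero.mp hk]
    have htend : Tendsto x atTop (nhds 1) := by
      apply Filter.Tendsto.congr' _ (tendsto_const_nhds : Tendsto (fun _ : ℕ => (1:ℝ)) atTop (nhds 1))
      filter_upwards [Filter.eventually_ge_atTop 1] with k hk
      exact (hx1 k hk).symm
    have hmem : ∀ k, x k ∈ Set.Icc (-2 : ℝ) 2 := by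
      intro k
      by_cases hk : k = 0 <;> simp [hxdef, hk] <;> norm_num
    have hrange : ∀ k, 0 ≤ x k ∧ x k ≤ 1 := by
      intro k
      by_cases hk : k = 0 <;> simp [hxdef, hk]
    have hlimsup : Filter.limsup (fun k => ‖x k - 0‖) Filter.atTop = 1 := by
      have heq : (fun k => ‖x k - 0‖) =ᶠ[Filter.atTop] fun _ => (1 : ℝ) := by
        filter_upwards [Filter.eventually_ge_atTop 1] with k hk
        rw [hx1 k hk]; norm_num
      rw [Filter.limsup_congr heq, Filter.limsup_const]
    have hball : x 0 ∈ Metric.ball (0:ℝ) r₀ ∩ Set.Icc (-2:ℝ) 2 :=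
      ⟨by simp [hx0, Metric.mem_ball, hr₀], by rw [hx0]; exact ⟨by norm_num, by norm_num⟩⟩
    have hud : UltimatelyDecreasing (fun x => |x + 1| + |x - 1|) x := by
      intro y hy
      rw [cluster_eq htend hy, hx0]
      norm_num
    have hrs : ResultStationary (Set.Icc (-2:ℝ) 2) (fun x => |x + 1| + |x - 1|) (δ/2) x := by
      intro y hy
      rw [cluster_eq htend hy]
      exact stationary_one (le_of_lt (half_pos hδ))
    have hpb : PathBounded (fun x => |x + 1| + |x - 1|) (lam/2) x := by
      intro k θ hθ
      have hk1 := hrange (k + 1)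
      have hk0 := hrange k
      have hin : -1 ≤ θ • x (k+1) + (1 - θ) • x k ∧ θ • x (k+1) + (1 - θ) • x k ≤ 1 := by
        simp only [smul_eq_mul]
        constructor
        · nlinarith [hθ.1, hθ.2, hk1.1, hk1.2, hk0.1, hk0.2]
        · nlinarith [hθ.1, hθ.2, hk1.1, hk1.2, hk0.1, hk0.2]
      simp only []
      rw [f_two hin.1 hin.2, hx0]
      norm_num
      linarith [half_pos hlam]
    have hlt := H (δ/2) ⟨half_pos hδ, half_lt_self hδ⟩ (lam/2) ⟨half_pos hlam, half_lt_self hlam⟩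
      x hmem hball hud hrs hpb
    rw [hlimsup] at hlt
    norm_num at hlt
end
end
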